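/- For every natural number n ≥ 1 and every real number x, one has 2 - L n (2 - x) (-1) = ∑_{k=1}^{n} (-1)^(k-1) · (Nat.choose (n+k) (2k) + Nat.choose (n+k-1) (2k)) · x^k. -/
import Mathlib

def L : ℕ → ℝ → ℝ → ℝ
  | 0, _, _ => 2
  | 1, x, _ => x
  | n + 2, x, s => x * L (n + 1) x s + s * L n x s

namespace Stmt15

def A (n m : ℕ) : ℕ := Nat.choose (n+m+1) (2*m+2) + Nat.choose (n+m) (2*m+2)

def e (n m : ℕ) : ℕ := Nat.choose (n+m+1) (2*m) + Nat.choose (n+m) (2*m)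

lemma pascal2 (p j : ℕ) :
    (p+2).choose (j+2) + p.choose (j+2) = 2 * (p+1).choose (j+2) + p.choose j := by
  have h1 : (p+2).choose (j+2) = (p+1).choose (j+1) + (p+1).choose (j+2) :=
    Nat.choose_succ_succ _ _
  have h2 : (p+1).choose (j+2) = p.choose (j+1) + p.choose (j+2) :=
    Nat.choose_succ_succ _ _
  have h3 : (p+1).choose (j+1) = p.choose j + p.choose (j+1) :=
    Nat.choose_succ_succ _ _
  rw [h1, h3, h2]; ring

lemma keyflat (p j : ℕ) :
    ((p+3).choose (j+2) + (p+2).choose (j+2)) + ((p+1).choose (j+2) + p.choose (j+2))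
      = 2 * ((p+2).choose (j+2) + (p+1).choose (j+2)) + ((p+1).choose j + p.choose j) := by
  have h1 : (p+3).choose (j+2) + (p+1).choose (j+2)
      = 2 * (p+2).choose (j+2) + (p+1).choose j := pascal2 (p+1) j
  have h2 : (p+2).choose (j+2) + p.choose (j+2)
      = 2 * (p+1).choose (j+2) + p.choose j := pascal2 p j
  linarith

lemma keyAr (n m : ℕ) :
    (A (n+3) m : ℝ) + A (n+1) m = 2 * A (n+2) m + e (n+1) m := by
  have h : (n+m+4).choose (2*m+2) + (n+m+3).choose (2*m+2)
      + ((n+m+2).choose (2*m+2) + (n+m+1).choose (2*m+2))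
      = 2 * ((n+m+3).choose (2*m+2) + (n+m+2).choose (2*m+2))
        + ((n+m+2).choose (2*m) + (n+m+1).choose (2*m)) := keyflat (n+m+1) (2*m)
  unfold A e
  rw [show n+3+m+1 = n+m+4 from by omega, show n+3+m = n+m+3 from by omega,
      show n+2+m+1 = n+m+3 from by omega, show n+2+m = n+m+2 from by omega,
      show n+1+m+1 = n+m+2 from by omega, show n+1+m = n+m+1 from by omega]
  exact_mod_cast h

lemma e_succ (n j : ℕ) : e (n+1) (j+1) = A (n+2) j := by
  unfold e A
  rw [show n+1+(j+1)+1 = n+2+j+1 from by omega, show n+1+(j+1) = n+2+j from by omega,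
      show 2*(j+1) = 2*j+2 from by omega]

lemma e_zero (n : ℕ) : e n 0 = 2 := by simp [e]

lemma Azero {n m : ℕ} (h : n ≤ m) : A n m = 0 := by
  unfold A
  rw [Nat.choose_eq_zero_of_lt (by omega), Nat.choose_eq_zero_of_lt (by omega)]

noncomputable def T (x : ℝ) (n m : ℕ) : ℝ := (-1)^m * (A n m : ℝ) * x^(m+1)

noncomputable def S (x : ℝ) (n : ℕ) : ℝ := ∑ m ∈ Finset.range n, T x n m

lemma T_zero (x : ℝ) {n m : ℕ} (h : n ≤ m) : T x n m = 0 := by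
  simp [T, Azero h]

lemma S_pad (x : ℝ) {n N : ℕ} (h : n ≤ N) :
    S x n = ∑ m ∈ Finset.range N, T x n m := by
  unfold S
  apply Finset.sum_subset (Finset.range_subset_range.2 h)
  intro m _ hm
  exact T_zero x (by simpa using hm)

lemma Skey (x : ℝ) (n : ℕ) :
    S x (n+3) = 2 * S x (n+2) - S x (n+1) - x * S x (n+2) + 2*x := by
  have hE : (∑ m ∈ Finset.range (n+3), (-1:ℝ)^m * (e (n+1) m : ℝ) * x^(m+1))
      = 2*x - x * S x (n+2) := by
    rw [Finset.sum_range_succ']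
    have h0 : (-1:ℝ)^0 * (e (n+1) 0 : ℝ) * x^(0+1) = 2*x := by
      rw [e_zero]; push_cast; ring
    have h1 : ∀ j ∈ Finset.range (n+2),
        (-1:ℝ)^(j+1) * (e (n+1) (j+1) : ℝ) * x^(j+1+1) = -x * T x (n+2) j := by
      intro j _
      rw [e_succ]; simp [T]; ring
    rw [Finset.sum_congr rfl h1, h0, ← Finset.mul_sum]
    unfold S; ring
  have key : ∀ m ∈ Finset.range (n+3),
      T x (n+3) m = 2 * T x (n+2) m - T x (n+1) m
        + (-1:ℝ)^m * (e (n+1) m : ℝ) * x^(m+1) := by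
    intro m _
    have hc := keyAr n m
    simp only [T]
    linear_combination ((-1:ℝ)^m * x^(m+1)) * hc
  calc S x (n+3) = ∑ m ∈ Finset.range (n+3), T x (n+3) m := rfl
    _ = ∑ m ∈ Finset.range (n+3), (2 * T x (n+2) m - T x (n+1) m
          + (-1:ℝ)^m * (e (n+1) m : ℝ) * x^(m+1)) := Finset.sum_congr rfl key
    _ = 2 * (∑ m ∈ Finset.range (n+3), T x (n+2) m)
          - (∑ m ∈ Finset.range (n+3), T x (n+1) m)
          + (∑ m ∈ Finset.range (n+3), (-1:ℝ)^m * (e (n+1) m : ℝ) * x^(m+1)) := by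
        simp [Finset.sum_add_distrib, Finset.sum_sub_distrib, Finset.mul_sum]
    _ = 2 * S x (n+2) - S x (n+1) - x * S x (n+2) + 2*x := by
        rw [hE, ← S_pad x (by omega : n+2 ≤ n+3), ← S_pad x (by omega : n+1 ≤ n+3)]
        ring

lemma master (x : ℝ) (n : ℕ) :
    (2 - L (n+1) (2-x) (-1) = S x (n+1)) ∧ (2 - L (n+2) (2-x) (-1) = S x (n+2)) := by
  induction n with
  | zero =>
    constructor
    · show 2 - (2-x) = S x 1
      simp [S, T, A, Finset.sum_range_one]
    · show 2 - ((2-x) * L 1 (2-x) (-1) + (-1) * L 0 (2-x) (-1)) = S x 2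
      show 2 - ((2-x) * (2-x) + (-1) * 2) = S x 2
      simp [S, T, A, Finset.sum_range_succ]
      norm_num
      ring
  | succ k ih =>
    refine ⟨ih.2, ?_⟩
    have hL : L (k+3) (2-x) (-1) = (2-x) * L (k+2) (2-x) (-1) + (-1) * L (k+1) (2-x) (-1) := rfl
    have h1 := ih.1
    have h2 := ih.2
    have e1 : L (k+1) (2-x) (-1) = 2 - S x (k+1) := by linarith
    have e2 : L (k+2) (2-x) (-1) = 2 - S x (k+2) := by linarith
    rw [hL, e1, e2, Skey]
    ring

end Stmt15

theorem stmt_15 (n : ℕ) (hn : 1 ≤ n) (x : ℝ) :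
    2 - L n (2 - x) (-1) =
      ∑ k ∈ Finset.Icc 1 n,
        (-1 : ℝ) ^ (k - 1) *
          ((Nat.choose (n + k) (2 * k) + Nat.choose (n + k - 1) (2 * k) : ℕ) : ℝ) * x ^ k := by
  obtain ⟨m, rfl⟩ : ∃ m, n = m + 1 := ⟨n - 1, by omega⟩
  rw [(Stmt15.master x m).1, ← Finset.Ico_add_one_right_eq_Icc, Finset.sum_Ico_eq_sum_range]
  simp only [Nat.add_sub_cancel, Nat.succ_sub_one]
  unfold Stmt15.S
  refine Finset.sum_congr rfl fun j _ => ?_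
  simp only [Stmt15.T, Stmt15.A]
  rw [show 1+j-1 = j from by omega, show m+1+(1+j) = m+1+j+1 from by omega,
      show m+1+j+1-1 = m+1+j from by omega, show 2*(1+j) = 2*j+2 from by omega,
      show (1:ℕ)+j = j+1 from by omega]
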